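/- arXiv:2004.03430 — 2 statements merged into one kernel-verified Lean document; each statement's English description precedes it below -/
import Mathlib

section
/- Let p, q : ℕ → ℕ be sequences of nonnegative integers with p(n) < q(n) for all n and q(n) → ∞. Then the deferred Cesàro matrix method D_{p,q}, defined by (D_{p,q}x)_n = (1/(q(n)-p(n))) · Σ_{k=p(n)+1}^{q(n)} x_k, is regular: for every convergent sequence x with limit L, the sequence (D_{p,q}x)_n converges to L. -/
open Filter Topology

/-- The deferred Cesàro method `D_{p,q}` is regular: if `x → L` then the deferred
Cesàro means of `x` converge to `L`. -/
theorem deferred_cesaro_regular (p q : ℕ → ℕ) (hpq : ∀ n, p n < q n)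
    (hq : Tendsto q atTop atTop) (x : ℕ → ℂ) (L : ℂ)
    (hx : Tendsto x atTop (nhds L)) :
    Tendsto (fun n => ((q n : ℂ) - (p n : ℂ))⁻¹ * ∑ k ∈ Finset.Icc (p n + 1) (q n), x k)
      atTop (nhds L) := by
  set y : ℕ → ℂ := fun k => x k - L with hy_def
  have hy : Tendsto y atTop (nhds 0) := by
    simpa using hx.sub_const L
  obtain ⟨C, hC⟩ : BddAbove (Set.range fun k => ‖y k‖) := hy.norm.bddAbove_range
  have hC' : ∀ k, ‖y k‖ ≤ C := fun k => hC (Set.mem_range_self k)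
  have hC0 : 0 ≤ C := le_trans (norm_nonneg (y 0)) (hC' 0)
  have hmpos : ∀ n, 0 < q n - p n := fun n => Nat.sub_pos_of_lt (hpq n)
  have hcast : ∀ n, ((q n : ℂ) - (p n : ℂ)) = ((q n - p n : ℕ) : ℂ) := by
    intro n
    have h := (hpq n).le
    push_cast [h]
    ring
  have hmne : ∀ n, ((q n - p n : ℕ) : ℂ) ≠ 0 := fun n =>
    Nat.cast_ne_zero.mpr (hmpos n).ne'
  have hsum : ∀ n, (∑ k ∈ Finset.Icc (p n + 1) (q n), x k)
      = (∑ k ∈ Finset.Icc (p n + 1) (q n), y k) + ((q n - p n : ℕ) : ℂ) * L := by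
    intro n
    have hcard : (Finset.Icc (p n + 1) (q n)).card = q n - p n := by
      rw [Nat.card_Icc]; omega
    have h1 : ∀ k ∈ Finset.Icc (p n + 1) (q n), x k = y k + L := fun k _ => by
      simp [hy_def]
    rw [Finset.sum_congr rfl h1, Finset.sum_add_distrib, Finset.sum_const, hcard,
      nsmul_eq_mul]
  have main : Tendsto (fun n => ((q n - p n : ℕ) : ℂ)⁻¹ *
      ∑ k ∈ Finset.Icc (p n + 1) (q n), y k) atTop (nhds 0) := by
    rw [NormedAddCommGroup.tendsto_nhds_zero]
    have key : ∀ ε > (0:ℝ), ∀ᶠ n in atTop,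
        ‖((q n - p n : ℕ) : ℂ)⁻¹ * ∑ k ∈ Finset.Icc (p n + 1) (q n), y k‖ ≤ ε := by
      intro ε hε
      obtain ⟨K, hK⟩ := Metric.tendsto_atTop.mp hy (ε/2) (half_pos hε)
      have hK' : ∀ k, K ≤ k → ‖y k‖ ≤ ε/2 := by
        intro k hk
        have := hK k hk
        rw [dist_zero_right] at this
        exact this.le
      set B : ℕ := ⌈(K : ℝ) * C / (ε/2)⌉₊ + 1 with hBdef
      have hBpos : 0 < B := Nat.succ_pos _
      have hBge : (K : ℝ) * C / (ε/2) ≤ B := by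
        calc (K : ℝ) * C / (ε/2) ≤ ⌈(K : ℝ) * C / (ε/2)⌉₊ := Nat.le_ceil _
        _ ≤ B := by exact_mod_cast Nat.le_succ _
      have hKCB : (K : ℝ) * C / B ≤ ε/2 := by
        rw [div_le_iff₀ (by exact_mod_cast hBpos)]
        rw [div_le_iff₀ (half_pos hε)] at hBge
        linarith
      filter_upwards [hq.eventually_ge_atTop (K + B)] with n hn
      set m : ℕ := q n - p n with hm
      have hnorm : ‖((m : ℕ) : ℂ)⁻¹ * ∑ k ∈ Finset.Icc (p n + 1) (q n), y k‖
          = (m : ℝ)⁻¹ * ‖∑ k ∈ Finset.Icc (p n + 1) (q n), y k‖ := by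
        rw [norm_mul, norm_inv, Complex.norm_natCast]
      rw [hnorm]
      have hmR : (0:ℝ) < m := by exact_mod_cast hmpos n
      by_cases hpK : K ≤ p n
      · -- all indices are large
        have hS : ‖∑ k ∈ Finset.Icc (p n + 1) (q n), y k‖ ≤ (m : ℝ) * (ε/2) := by
          calc ‖∑ k ∈ Finset.Icc (p n + 1) (q n), y k‖
              ≤ ∑ k ∈ Finset.Icc (p n + 1) (q n), ‖y k‖ := norm_sum_le _ _
            _ ≤ (Finset.Icc (p n + 1) (q n)).card • (ε/2) := by
                apply Finset.sum_le_card_nsmul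
                intro k hk
                apply hK'
                have := (Finset.mem_Icc.mp hk).1
                omega
            _ = (m : ℝ) * (ε/2) := by
                rw [nsmul_eq_mul, Nat.card_Icc]
                congr 1
                norm_cast
                omega
        calc (m : ℝ)⁻¹ * ‖∑ k ∈ Finset.Icc (p n + 1) (q n), y k‖
            ≤ (m : ℝ)⁻¹ * ((m : ℝ) * (ε/2)) := by
              apply mul_le_mul_of_nonneg_left hS (by positivity)
          _ = ε/2 := by field_simp
          _ ≤ ε := by linarith
      · -- p n < K : split the sum
        push_neg at hpK
        have hKq : K ≤ q n := by omega
        have hsplit : (∑ k ∈ Finset.Ioc (p n) K, y k) + (∑ k ∈ Finset.Ioc K (q n), y k)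
            = ∑ k ∈ Finset.Ioc (p n) (q n), y k :=
          Finset.sum_Ioc_consecutive _ hpK.le hKq
        have hIcc : Finset.Icc (p n + 1) (q n) = Finset.Ioc (p n) (q n) := by
          ext k; simp [Finset.mem_Icc, Finset.mem_Ioc]
        have hS1 : ‖∑ k ∈ Finset.Ioc (p n) K, y k‖ ≤ (K : ℝ) * C := by
          calc ‖∑ k ∈ Finset.Ioc (p n) K, y k‖
              ≤ ∑ k ∈ Finset.Ioc (p n) K, ‖y k‖ := norm_sum_le _ _
            _ ≤ (Finset.Ioc (p n) K).card • C :=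
                Finset.sum_le_card_nsmul _ _ _ (fun k _ => hC' k)
            _ = ((K - p n : ℕ) : ℝ) * C := by rw [nsmul_eq_mul, Nat.card_Ioc]
            _ ≤ (K : ℝ) * C := by
                apply mul_le_mul_of_nonneg_right _ hC0
                exact_mod_cast Nat.sub_le _ _
        have hS2 : ‖∑ k ∈ Finset.Ioc K (q n), y k‖ ≤ (m : ℝ) * (ε/2) := by
          calc ‖∑ k ∈ Finset.Ioc K (q n), y k‖
              ≤ ∑ k ∈ Finset.Ioc K (q n), ‖y k‖ := norm_sum_le _ _
            _ ≤ (Finset.Ioc K (q n)).card • (ε/2) := by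
                apply Finset.sum_le_card_nsmul
                intro k hk
                exact hK' k (Finset.mem_Ioc.mp hk).1.le
            _ = ((q n - K : ℕ) : ℝ) * (ε/2) := by rw [nsmul_eq_mul, Nat.card_Ioc]
            _ ≤ (m : ℝ) * (ε/2) := by
                apply mul_le_mul_of_nonneg_right _ (by positivity)
                have : q n - K ≤ m := by omega
                exact_mod_cast this
        have hmB : (B : ℝ) ≤ (m : ℝ) := by
          have : B ≤ m := by omega
          exact_mod_cast this
        have hBR : (0:ℝ) < B := by exact_mod_cast hBpos
        have hS : ‖∑ k ∈ Finset.Icc (p n + 1) (q n), y k‖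
            ≤ (K : ℝ) * C + (m : ℝ) * (ε/2) := by
          rw [hIcc, ← hsplit]
          calc ‖(∑ k ∈ Finset.Ioc (p n) K, y k) + (∑ k ∈ Finset.Ioc K (q n), y k)‖
              ≤ ‖∑ k ∈ Finset.Ioc (p n) K, y k‖ + ‖∑ k ∈ Finset.Ioc K (q n), y k‖ :=
                norm_add_le _ _
            _ ≤ (K : ℝ) * C + (m : ℝ) * (ε/2) := add_le_add hS1 hS2
        calc (m : ℝ)⁻¹ * ‖∑ k ∈ Finset.Icc (p n + 1) (q n), y k‖
            ≤ (m : ℝ)⁻¹ * ((K : ℝ) * C + (m : ℝ) * (ε/2)) := by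
              apply mul_le_mul_of_nonneg_left hS (by positivity)
          _ = (K : ℝ) * C / m + ε/2 := by field_simp
          _ ≤ (K : ℝ) * C / B + ε/2 := by
              gcongr
          _ ≤ ε/2 + ε/2 := by linarith
          _ = ε := by ring
    intro ε hε
    filter_upwards [key (ε/2) (half_pos hε)] with n hn
    exact hn.trans_lt (half_lt_self hε)
  have final : Tendsto (fun n => ((q n - p n : ℕ) : ℂ)⁻¹ *
      (∑ k ∈ Finset.Icc (p n + 1) (q n), y k) + L) atTop (nhds (0 + L)) :=
    main.add_const L
  rw [zero_add] at final
  refine final.congr fun n => ?_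
  rw [hcast n, hsum n, mul_add, inv_mul_cancel_left₀ (hmne n)]
end

section
/- Let p, q : ℕ → ℕ with p(n) < q(n) and q(n) → ∞. The space [σ₀]_p^q = { x ∈ ℂ^ℕ : lim_n (1/(q(n)-p(n))) Σ_{k=p(n)+1}^{q(n)} x_k = 0 } is a normed space under ‖x‖ = sup_n |(1/(q(n)-p(n))) Σ_{k=p(n)+1}^{q(n)} x_k|, and this supremum is finite for every x in the space. -/
/-!
The deferred Cesàro mean is linear in the sequence, so the sequences whose deferred means
tend to `0` form the preimage of a subspace under a linear map, and the candidate norm is the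
sup norm of the image. A sequence tending to `0` is bounded, so this sup is finite, and the
sup norm of a bounded sequence is subadditive and absolutely homogeneous.
-/

open Filter Topology

section SupNorm

variable {ι 𝕜 E : Type*} [SeminormedAddCommGroup E]

theorem iSup_norm_add_le [Nonempty ι] {f g : ι → E} (hf : BddAbove (Set.range fun i => ‖f i‖))
    (hg : BddAbove (Set.range fun i => ‖g i‖)) :
    ⨆ i, ‖f i + g i‖ ≤ (⨆ i, ‖f i‖) + ⨆ i, ‖g i‖ :=
  ciSup_le fun i => (norm_add_le _ _).trans (add_le_add (le_ciSup hf i) (le_ciSup hg i))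

theorem iSup_norm_smul [SeminormedRing 𝕜] [Module 𝕜 E] [NormSMulClass 𝕜 E] (a : 𝕜) (f : ι → E) :
    ⨆ i, ‖a • f i‖ = ‖a‖ * ⨆ i, ‖f i‖ := by
  simp only [norm_smul]
  exact (Real.mul_iSup_of_nonneg (norm_nonneg a) _).symm

end SupNorm

def tendstoZeroSubmodule (𝕜 E : Type*) {ι : Type*} [Semiring 𝕜] [TopologicalSpace E]
    [AddCommMonoid E] [ContinuousAdd E] [Module 𝕜 E] [ContinuousConstSMul 𝕜 E] (l : Filter ι) :
    Submodule 𝕜 (ι → E) where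
  carrier := {f | Tendsto f l (𝓝 0)}
  zero_mem' := tendsto_const_nhds
  add_mem' hf hg := add_zero (0 : E) ▸ hf.add hg
  smul_mem' c _ hf := smul_zero (A := E) c ▸ hf.const_smul c

def deferredMean (𝕜 : Type*) {E : Type*} [Field 𝕜] [AddCommGroup E] [Module 𝕜 E]
    (p q : ℕ → ℕ) : (ℕ → E) →ₗ[𝕜] ℕ → E where
  toFun x n := ((q n : 𝕜) - p n)⁻¹ • ∑ k ∈ Finset.Icc (p n + 1) (q n), x k
  map_add' x y := by ext n; simp [Finset.sum_add_distrib]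
  map_smul' a x := by ext n; simp [Finset.smul_sum, smul_comm a]

theorem sigma0_pq_normed_space_general (p q : ℕ → ℕ) :
    let dm : (ℕ → ℂ) → ℕ → ℂ :=
      fun x n => ((q n : ℂ) - (p n : ℂ))⁻¹ * ∑ k ∈ Finset.Icc (p n + 1) (q n), x k
    let S : Set (ℕ → ℂ) := {x | Tendsto (dm x) atTop (nhds 0)}
    let N : (ℕ → ℂ) → ℝ := fun x => ⨆ n, ‖dm x n‖
    -- `S` is a linear subspace
    ((0 : ℕ → ℂ) ∈ S) ∧
    (∀ x ∈ S, ∀ y ∈ S, x + y ∈ S) ∧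
    (∀ (a : ℂ), ∀ x ∈ S, a • x ∈ S) ∧
    -- the norm is finite-valued on `S`
    (∀ x ∈ S, BddAbove (Set.range fun n => ‖dm x n‖)) ∧
    -- norm axioms
    (N 0 = 0) ∧
    (∀ x ∈ S, 0 ≤ N x) ∧
    (∀ x ∈ S, ∀ y ∈ S, N (x + y) ≤ N x + N y) ∧
    (∀ (a : ℂ), ∀ x ∈ S, N (a • x) = ‖a‖ * N x) := by
  intro dm S N
  let T := deferredMean ℂ (E := ℂ) p q
  let M := (tendstoZeroSubmodule ℂ ℂ atTop).comap T
  have hbdd : ∀ x ∈ S, BddAbove (Set.range fun n => ‖dm x n‖) := fun x hx =>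
    (tendsto_zero_iff_norm_tendsto_zero.1 hx).bddAbove_range
  refine ⟨M.zero_mem, fun x hx y hy => M.add_mem hx hy, fun a x hx => M.smul_mem a hx, hbdd,
    ?_, fun x _ => Real.iSup_nonneg fun n => norm_nonneg _, fun x hx y hy => ?_, fun a x _ => ?_⟩
  · simp [N, show dm 0 = 0 from map_zero T]
  · show ⨆ n, ‖T (x + y) n‖ ≤ (⨆ n, ‖T x n‖) + ⨆ n, ‖T y n‖
    rw [map_add]
    exact iSup_norm_add_le (hbdd x hx) (hbdd y hy)
  · show ⨆ n, ‖T (a • x) n‖ = ‖a‖ * ⨆ n, ‖T x n‖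
    rw [map_smul]
    exact iSup_norm_smul a (T x)

/-- `[σ₀]_p^q` is a normed (sequence) space under the sup of absolute values of the
deferred Cesàro means, and this supremum is finite for every member. -/
theorem sigma0_pq_normed_space (p q : ℕ → ℕ) (hpq : ∀ n, p n < q n)
    (hq : Tendsto q atTop atTop) :
    let dm : (ℕ → ℂ) → ℕ → ℂ :=
      fun x n => ((q n : ℂ) - (p n : ℂ))⁻¹ * ∑ k ∈ Finset.Icc (p n + 1) (q n), x k
    let S : Set (ℕ → ℂ) := {x | Tendsto (dm x) atTop (nhds 0)}
    let N : (ℕ → ℂ) → ℝ := fun x => ⨆ n, ‖dm x n‖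
    -- `S` is a linear subspace
    ((0 : ℕ → ℂ) ∈ S) ∧
    (∀ x ∈ S, ∀ y ∈ S, x + y ∈ S) ∧
    (∀ (a : ℂ), ∀ x ∈ S, a • x ∈ S) ∧
    -- the norm is finite-valued on `S`
    (∀ x ∈ S, BddAbove (Set.range fun n => ‖dm x n‖)) ∧
    -- norm axioms
    (N 0 = 0) ∧
    (∀ x ∈ S, 0 ≤ N x) ∧
    (∀ x ∈ S, ∀ y ∈ S, N (x + y) ≤ N x + N y) ∧
    (∀ (a : ℂ), ∀ x ∈ S, N (a • x) = ‖a‖ * N x) :=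
  sigma0_pq_normed_space_general p q
end
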